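/- Let ψ ∈ ℂ^(Fin n → Fin 2) be a unit vector all of whose entries are real, and let ρ = ψψᴴ be the associated pure state. Then the Bell distribution of ρ coincides with its Pauli distribution: for every a ∈ (Fin n → Fin 4), q_ρ(a) := ⟨Φ_a| (ρ ⊗ ρ) |Φ_a⟩ = ⟨ψ| P_a |ψ⟩² / 2ⁿ = p_ρ(a). -/

import Mathlib

open Matrix Kronecker
open scoped ComplexOrder

noncomputable def pauli1 : Fin 4 → Matrix (Fin 2) (Fin 2) ℂ
  | 0 => !![1, 0; 0, 1]
  | 1 => !![0, 1; 1, 0]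
  | 2 => !![0, -Complex.I; Complex.I, 0]
  | 3 => !![1, 0; 0, -1]

noncomputable def PauliOp {n : ℕ} (a : Fin n → Fin 4) :
    Matrix (Fin n → Fin 2) (Fin n → Fin 2) ℂ :=
  Matrix.of fun z z' => ∏ i, pauli1 (a i) (z i) (z' i)

/-- The positive semidefinite square root of a positive semidefinite matrix
(the definition `Matrix.PosSemidef.sqrt` of the older Mathlib, removed since). -/
noncomputable def Matrix.PosSemidef.sqrt {n : Type*} [Fintype n] [DecidableEq n]
    {𝕜 : Type*} [RCLike 𝕜] {A : Matrix n n 𝕜} (hA : A.PosSemidef) : Matrix n n 𝕜 :=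
  hA.isHermitian.eigenvectorUnitary.1 * diagonal ((↑) ∘ (√·) ∘ hA.isHermitian.eigenvalues) *
  (star hA.isHermitian.eigenvectorUnitary : Matrix n n 𝕜)

/-- The trace norm of a matrix: the trace of the positive semidefinite square root of `Aᴴ * A`. -/
noncomputable def traceNorm {m : Type*} [Fintype m] [DecidableEq m]
    (A : Matrix m m ℂ) : ℝ :=
  (Matrix.PosSemidef.sqrt (Matrix.posSemidef_conjTranspose_mul_self A)).trace.re

/-- A quantum state: positive semidefinite with unit trace. -/
structure IsState {m : Type*} [Fintype m] (ρ : Matrix m m ℂ) : Prop where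
  posSemidef : ρ.PosSemidef
  trace_one : ρ.trace = 1

/-- Pauli expectation value `⟨P_a⟩_ρ`. -/
noncomputable def pExp {n : ℕ} (ρ : Matrix (Fin n → Fin 2) (Fin n → Fin 2) ℂ)
    (a : Fin n → Fin 4) : ℝ := ((PauliOp a * ρ).trace).re

/-- The purity `tr ρ²`. -/
noncomputable def purity {m : Type*} [Fintype m] (ρ : Matrix m m ℂ) : ℝ :=
  ((ρ * ρ).trace).re

/-- The Pauli distribution `p_ρ`. -/
noncomputable def pDist {n : ℕ} (ρ : Matrix (Fin n → Fin 2) (Fin n → Fin 2) ℂ)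
    (a : Fin n → Fin 4) : ℝ := (pExp ρ a) ^ 2 / (2 ^ n * purity ρ)

/-- The cumulative distribution function `F_ρ`. -/
noncomputable def cdf {n : ℕ} (ρ : Matrix (Fin n → Fin 2) (Fin n → Fin 2) ℂ)
    (ε : ℝ) : ℝ := ∑ a : Fin n → Fin 4, if (pExp ρ a) ^ 2 ≤ ε then pDist ρ a else 0

/-- The maximally entangled state `|Φ₀⟩`. -/
noncomputable def Phi0 (n : ℕ) : (Fin n → Fin 2) × (Fin n → Fin 2) → ℂ :=
  fun p => if p.1 = p.2 then (↑(Real.sqrt (2 ^ n)))⁻¹ else 0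

/-- The Bell state `|Φ_a⟩ = (1 ⊗ P_a)|Φ₀⟩`. -/
noncomputable def BellVec {n : ℕ} (a : Fin n → Fin 4) :
    (Fin n → Fin 2) × (Fin n → Fin 2) → ℂ :=
  ((1 : Matrix (Fin n → Fin 2) (Fin n → Fin 2) ℂ) ⊗ₖ PauliOp a).mulVec (Phi0 n)

/-- The Bell distribution `q_ρ(a) = ⟨Φ_a| ρ ⊗ ρ |Φ_a⟩`. -/
noncomputable def qDist {n : ℕ} (ρ : Matrix (Fin n → Fin 2) (Fin n → Fin 2) ℂ)
    (a : Fin n → Fin 4) : ℝ :=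
  (star (BellVec a) ⬝ᵥ ((ρ ⊗ₖ ρ).mulVec (BellVec a))).re

/-- The W state. -/
noncomputable def Wstate (n : ℕ) : (Fin n → Fin 2) → ℂ :=
  fun z => if (∑ i, (z i : ℕ)) = 1 then (↑(Real.sqrt n))⁻¹ else 0

/-- The W state projector `|W_n⟩⟨W_n|`. -/
noncomputable def Wproj (n : ℕ) : Matrix (Fin n → Fin 2) (Fin n → Fin 2) ℂ :=
  Matrix.vecMulVec (Wstate n) (star (Wstate n))

/- Up to the factor `2^{-n/2}`, the amplitude `⟨φ ⊗ χ|(1 ⊗ A)|Φ₀⟩` is the bilinear form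
`χᵀ A φ`. For `ρ = ψψᴴ`, `ρ ⊗ ρ` is the projector onto `ψ ⊗ ψ`, so
`q_ρ(a) = |⟨ψ ⊗ ψ|Φ_a⟩|² = |ψᴴ P_a ψ̄|² / 2ⁿ`. When `ψ` is real, `ψ̄ = ψ` and `ψᴴ P_a ψ` is real
because `P_a` is Hermitian, so this is `⟨ψ|P_a|ψ⟩² / 2ⁿ`; on the other hand a pure state has
`⟨P_a⟩_ρ = ⟨ψ|P_a|ψ⟩` and purity `1`. -/

lemma pauli1_isHermitian (k : Fin 4) : (pauli1 k).IsHermitian := by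
  ext i j
  fin_cases k <;> fin_cases i <;> fin_cases j <;> simp [pauli1]

lemma PauliOp_isHermitian {n : ℕ} (a : Fin n → Fin 4) : (PauliOp a).IsHermitian := by
  ext z z'
  simp only [conjTranspose_apply, PauliOp, of_apply, star_prod]
  exact Finset.prod_congr rfl fun i _ => (pauli1_isHermitian (a i)).apply (z i) (z' i)

lemma kroneckerMap_vecMulVec {l m l' m' α : Type*} [CommMonoid α]
    (u : l → α) (v : m → α) (u' : l' → α) (v' : m' → α) :
    vecMulVec u v ⊗ₖ vecMulVec u' v' =
      vecMulVec (fun p => u p.1 * u' p.2) (fun q => v q.1 * v' q.2) := by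
  ext p q
  simp only [kroneckerMap_apply, vecMulVec_apply]
  ac_rfl

lemma dotProduct_vecMulVec_mulVec {m n α : Type*} [Fintype m] [Fintype n] [CommSemiring α]
    (x u : m → α) (v y : n → α) :
    x ⬝ᵥ (vecMulVec u v *ᵥ y) = (x ⬝ᵥ u) * (v ⬝ᵥ y) := by
  rw [vecMulVec_mulVec, dotProduct_smul, MulOpposite.smul_eq_mul_unop, MulOpposite.unop_op,
    mul_comm]

lemma star_dotProduct_vecMulVec_star_mulVec {m : Type*} [Fintype m] (x w : m → ℂ) :
    star x ⬝ᵥ (vecMulVec w (star w) *ᵥ x) = Complex.normSq (star w ⬝ᵥ x) := by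
  rw [dotProduct_vecMulVec_mulVec, star_dotProduct, Complex.normSq_eq_conj_mul_self]
  rfl

lemma one_kronecker_mulVec_Phi0 {n : ℕ} (A : Matrix (Fin n → Fin 2) (Fin n → Fin 2) ℂ)
    (p : (Fin n → Fin 2) × (Fin n → Fin 2)) :
    ((1 : Matrix (Fin n → Fin 2) (Fin n → Fin 2) ℂ) ⊗ₖ A *ᵥ Phi0 n) p
      = A p.2 p.1 * (√(2 ^ n) : ℂ)⁻¹ := by
  simp only [mulVec, dotProduct, Fintype.sum_prod_type, kroneckerMap_apply, Phi0, one_apply,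
    ite_mul, one_mul, zero_mul, mul_ite, mul_zero]
  rw [Finset.sum_eq_single p.1]
  · simp
  · intro w _ hw
    simp [Ne.symm hw]
  · simp

lemma tensor_dotProduct_one_kronecker_mulVec_Phi0 {n : ℕ}
    (A : Matrix (Fin n → Fin 2) (Fin n → Fin 2) ℂ) (φ χ : (Fin n → Fin 2) → ℂ) :
    (fun p => φ p.1 * χ p.2) ⬝ᵥ ((1 : Matrix (Fin n → Fin 2) (Fin n → Fin 2) ℂ) ⊗ₖ A *ᵥ Phi0 n)
      = (√(2 ^ n) : ℂ)⁻¹ * (χ ⬝ᵥ A *ᵥ φ) := by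
  simp only [dotProduct, one_kronecker_mulVec_Phi0]
  simp only [Fintype.sum_prod_type, mulVec, dotProduct, Finset.mul_sum]
  rw [Finset.sum_comm]
  refine Finset.sum_congr rfl fun w _ => Finset.sum_congr rfl fun z _ => ?_
  ring

lemma qDist_vecMulVec_star {n : ℕ} (ψ : (Fin n → Fin 2) → ℂ) (a : Fin n → Fin 4) :
    qDist (vecMulVec ψ (star ψ)) a = Complex.normSq (star ψ ⬝ᵥ PauliOp a *ᵥ star ψ) / 2 ^ n := by
  have hstar : star (fun p : (Fin n → Fin 2) × (Fin n → Fin 2) => ψ p.1 * ψ p.2)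
      = fun p => star ψ p.1 * star ψ p.2 := funext fun p => star_mul' (ψ p.1) (ψ p.2)
  rw [qDist, kroneckerMap_vecMulVec, ← hstar, star_dotProduct_vecMulVec_star_mulVec, hstar,
    BellVec, tensor_dotProduct_one_kronecker_mulVec_Phi0, Complex.ofReal_re, map_mul,
    map_inv₀, Complex.normSq_ofReal, Real.mul_self_sqrt (by positivity)]
  ring

lemma pExp_vecMulVec_star {n : ℕ} (ψ : (Fin n → Fin 2) → ℂ) (a : Fin n → Fin 4) :
    pExp (vecMulVec ψ (star ψ)) a = (star ψ ⬝ᵥ PauliOp a *ᵥ ψ).re := by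
  rw [pExp, mul_vecMulVec, trace_vecMulVec, dotProduct_comm]

lemma purity_vecMulVec_star {m : Type*} [Fintype m] {ψ : m → ℂ} (hψ : star ψ ⬝ᵥ ψ = 1) :
    purity (vecMulVec ψ (star ψ)) = 1 := by
  rw [purity, vecMulVec_mul_vecMulVec, hψ, one_smul, trace_vecMulVec, dotProduct_comm, hψ,
    Complex.one_re]

lemma pDist_vecMulVec_star {n : ℕ} {ψ : (Fin n → Fin 2) → ℂ} (hψ : star ψ ⬝ᵥ ψ = 1)
    (a : Fin n → Fin 4) :
    pDist (vecMulVec ψ (star ψ)) a = (star ψ ⬝ᵥ PauliOp a *ᵥ ψ).re ^ 2 / 2 ^ n := by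
  rw [pDist, pExp_vecMulVec_star, purity_vecMulVec_star hψ, mul_one]

theorem stmt_11_general {n : ℕ} (ψ : (Fin n → Fin 2) → ℂ)
    (hreal : ∀ z, (ψ z).im = 0) (hunit : star ψ ⬝ᵥ ψ = 1) :
    ∀ a : Fin n → Fin 4,
      qDist (Matrix.vecMulVec ψ (star ψ)) a
        = (star ψ ⬝ᵥ (PauliOp a).mulVec ψ).re ^ 2 / 2 ^ n ∧
      qDist (Matrix.vecMulVec ψ (star ψ)) a
        = pDist (Matrix.vecMulVec ψ (star ψ)) a := by
  intro a
  have hψ : star ψ = ψ := funext fun z => Complex.conj_eq_iff_im.mpr (hreal z)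
  have him : (star ψ ⬝ᵥ PauliOp a *ᵥ ψ).im = 0 :=
    (PauliOp_isHermitian a).im_star_dotProduct_mulVec_self ψ
  have hq : qDist (vecMulVec ψ (star ψ)) a = (star ψ ⬝ᵥ PauliOp a *ᵥ ψ).re ^ 2 / 2 ^ n := by
    rw [qDist_vecMulVec_star]
    rw [hψ] at him ⊢
    rw [Complex.normSq_apply, him]
    ring
  exact ⟨hq, hq.trans (pDist_vecMulVec_star hunit a).symm⟩

/-- For a real unit vector `ψ` and `ρ = ψψᴴ`, the Bell distribution
coincides with the Pauli distribution: `q_ρ(a) = ⟨ψ|P_a|ψ⟩²/2ⁿ = p_ρ(a)`. -/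
theorem stmt_11 {n : ℕ} (hn : 1 ≤ n) (ψ : (Fin n → Fin 2) → ℂ)
    (hreal : ∀ z, (ψ z).im = 0) (hunit : star ψ ⬝ᵥ ψ = 1) :
    ∀ a : Fin n → Fin 4,
      qDist (Matrix.vecMulVec ψ (star ψ)) a
        = (star ψ ⬝ᵥ (PauliOp a).mulVec ψ).re ^ 2 / 2 ^ n ∧
      qDist (Matrix.vecMulVec ψ (star ψ)) a
        = pDist (Matrix.vecMulVec ψ (star ψ)) a :=
  stmt_11_general ψ hreal hunit
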